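/- Let C be a cycle of even length at least 8 in a complete r-partite graph G. If C does not contain two adjacent odd chords, then every even chord of C with split at least 4 exists in G; that is, any two vertices of C whose distance along C is even and at least 4 are adjacent in G. -/

import Mathlib

variable {V : Type*} [Fintype V] [DecidableEq V]

/-- `M` is a perfect matching of `G`: every edge of `M` is an edge of `G`,
and every vertex lies in exactly one edge of `M`. -/
def IsPM (G : SimpleGraph V) (M : Finset (Sym2 V)) : Prop :=
  (∀ e ∈ M, e ∈ G.edgeSet) ∧ ∀ v : V, ∃! e, e ∈ M ∧ v ∈ e

/-- The `M`-induced weight of an edge, for the coloring `c` (`true` = red):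
`-1` for red matching edges, `+1` for red non-matching edges, `0` for blue edges. -/
def wt (c : Sym2 V → Bool) (M : Finset (Sym2 V)) (e : Sym2 V) : ℤ :=
  if c e then (if e ∈ M then -1 else 1) else 0

/-- Number of red edges of a finite edge set. -/
def redCount (c : Sym2 V → Bool) (F : Finset (Sym2 V)) : ℕ :=
  (F.filter (fun e => c e = true)).card

/-- A walk is `M`-alternating if consecutive edges have opposite membership in `M`. -/
def IsAlt (M : Finset (Sym2 V)) {G : SimpleGraph V} {u v : V} (P : G.Walk u v) : Prop :=
  P.edges.Chain' (fun e f => (e ∈ M) ↔ f ∉ M)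

/-- The `i`-th vertex (cyclically, indices mod `C.length`) along a closed walk `C`. -/
def cvtx {G : SimpleGraph V} {v : V} (C : G.Walk v v) (i : ℕ) : V :=
  C.support.tail.getD (i % C.length) v

/-- Positions `i, j` on the cycle `C` carry a chord: the corresponding vertices are
adjacent in `G` but the edge is not an edge of `C`. -/
def IsChordAt {G : SimpleGraph V} {v : V} (C : G.Walk v v) (i j : ℕ) : Prop :=
  G.Adj (cvtx C i) (cvtx C j) ∧ s(cvtx C i, cvtx C j) ∉ C.edges

/-- `C` has an odd chord: a chord splitting `C` into two odd-length paths. -/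
def HasOddChord {G : SimpleGraph V} {v : V} (C : G.Walk v v) : Prop :=
  ∃ i j : ℕ, i < j ∧ j < C.length ∧ Odd (j - i) ∧ IsChordAt C i j

/-- `C` has two adjacent odd chords: chords `{u,v₀} = {cvtx i, cvtx (i+d)}` and
`{x,y} = {cvtx (i+d+1), cvtx (i+n-1)}` whose endpoints appear in cyclic order
`u, v₀, x, y` with `{v₀,x}` and `{y,u}` edges of `C`, both chords odd. -/
def HasTwoAdjOddChords {G : SimpleGraph V} {v : V} (C : G.Walk v v) : Prop :=
  ∃ i d : ℕ, 1 ≤ d ∧ d + 3 ≤ C.length ∧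
    IsChordAt C i (i + d) ∧ (Odd d ∨ Odd (C.length - d)) ∧
    IsChordAt C (i + d + 1) (i + C.length - 1) ∧
    (Odd (C.length - d - 2) ∨ Odd (d + 2))

/-!
If `cvtx C i` and `cvtx C j` were not adjacent, they would lie in the same part, since non-adjacency
is transitive in a complete multipartite graph. Each neighbour of one of them on `C` lies in another
part, so `cvtx C (j - 1)` is adjacent to `cvtx C i` and `cvtx C (i - 1)` to `cvtx C j`. Because
`j - i` is even and both arcs of `C` between `i` and `j` have length at least `4`, these two edges
are odd chords of `C`, and they are adjacent, a contradiction.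
-/

namespace SimpleGraph

theorem isCompleteMultipartite_of_adj_iff {α ι : Type*} {G : SimpleGraph α} (f : α → ι)
    (hf : ∀ u w, G.Adj u w ↔ f u ≠ f w) : G.IsCompleteMultipartite :=
  ⟨fun u v w huv hvw => by simp_all⟩

theorem IsCompleteMultipartite.adj_of_adj_of_not_adj {α : Type*} {G : SimpleGraph α}
    (hG : G.IsCompleteMultipartite) {u w x : α} (huw : ¬ G.Adj u w) (hxw : G.Adj x w) :
    G.Adj x u := by
  by_contra hxu
  exact hG.trans _ _ _ hxu huw hxw

end SimpleGraph

open SimpleGraph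

section Cycle

variable {α : Type*} {G : SimpleGraph α} {u : α} {C : G.Walk u u}

theorem cvtx_congr {a b : ℕ} (h : a ≡ b [MOD C.length]) : cvtx C a = cvtx C b := by
  unfold cvtx
  rw [h]

theorem cvtx_add_length (i : ℕ) : cvtx C (i + C.length) = cvtx C i :=
  cvtx_congr (Nat.add_modulus_modEq_iff.2 (Nat.ModEq.refl i))

theorem cvtx_eq_getVert (hn : 0 < C.length) (i : ℕ) :
    cvtx C i = C.getVert (i % C.length + 1) := by
  have hi : i % C.length + 1 ≤ C.length := Nat.mod_lt _ hn
  have htail : i % C.length < C.support.tail.length := by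
    rw [List.length_tail, Walk.length_support]; omega
  rw [cvtx, List.getD_eq_getElem _ _ htail, List.getElem_tail, C.getVert_eq_support_getElem hi]

theorem getVert_eq_cvtx (hn : 0 < C.length) {k : ℕ} (hk : k ≤ C.length) :
    C.getVert k = cvtx C (k + C.length - 1) := by
  rw [cvtx_eq_getVert hn]
  rcases Nat.eq_zero_or_pos k with rfl | hk0
  · rw [Nat.zero_add, Nat.mod_eq_of_lt (by omega), Nat.sub_add_cancel hn,
      Walk.getVert_zero, Walk.getVert_length]
  · rw [show k + C.length - 1 = k - 1 + C.length by omega, Nat.add_mod_right,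
      Nat.mod_eq_of_lt (by omega), Nat.sub_add_cancel hk0]

theorem SimpleGraph.Walk.IsCycle.cvtx_eq_cvtx_iff (hC : C.IsCycle) {a b : ℕ} :
    cvtx C a = cvtx C b ↔ a ≡ b [MOD C.length] := by
  have hn : 0 < C.length := by have := hC.three_le_length; omega
  refine ⟨fun h => ?_, cvtx_congr⟩
  rw [cvtx_eq_getVert hn, cvtx_eq_getVert hn] at h
  have ha : a % C.length < C.length := Nat.mod_lt _ hn
  have hb : b % C.length < C.length := Nat.mod_lt _ hn
  exact Nat.succ_injective (hC.getVert_injOn ⟨by omega, by omega⟩ ⟨by omega, by omega⟩ h)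

theorem SimpleGraph.Walk.IsCycle.adj_cvtx_succ (hC : C.IsCycle) (i : ℕ) :
    G.Adj (cvtx C i) (cvtx C (i + 1)) := by
  have hn : 0 < C.length := by have := hC.three_le_length; omega
  set k := (i + 1) % C.length
  have hk_lt : k < C.length := Nat.mod_lt _ hn
  have hk_mod : k ≡ i + 1 [MOD C.length] := Nat.mod_modEq _ _
  have hadj := C.adj_getVert_succ hk_lt
  rw [getVert_eq_cvtx hn hk_lt.le, getVert_eq_cvtx hn hk_lt,
    show k + 1 + C.length - 1 = k + C.length by omega] at hadj
  convert hadj using 1 <;> refine cvtx_congr (Nat.ModEq.symm ?_)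
  · refine Nat.ModEq.add_right_cancel' 1 ?_
    rw [Nat.sub_add_cancel (by omega)]
    exact Nat.add_modulus_modEq_iff.2 hk_mod
  · exact Nat.add_modulus_modEq_iff.2 hk_mod

theorem exists_eq_mk_cvtx_of_mem_edges (hn : 0 < C.length) {e : Sym2 α} (he : e ∈ C.edges) :
    ∃ m, e = s(cvtx C m, cvtx C (m + 1)) := by
  induction e using Sym2.ind with
  | _ x y =>
    obtain ⟨k, hk, hxy⟩ := (C.mk_mem_edges_iff_exists).1 he
    refine ⟨k + C.length - 1, ?_⟩
    rw [← hxy, getVert_eq_cvtx hn hk.le, getVert_eq_cvtx hn hk,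
      show k + 1 + C.length - 1 = k + C.length - 1 + 1 by omega]

theorem SimpleGraph.Walk.IsCycle.mk_cvtx_add_notMem_edges (hC : C.IsCycle) (a : ℕ) {d : ℕ}
    (hd : 2 ≤ d) (hdn : d + 2 ≤ C.length) : s(cvtx C a, cvtx C (a + d)) ∉ C.edges := by
  intro hmem
  obtain ⟨m, hm⟩ := exists_eq_mk_cvtx_of_mem_edges (by omega) hmem
  simp only [Sym2.eq_iff, hC.cvtx_eq_cvtx_iff] at hm
  rcases hm with ⟨ham, hadm⟩ | ⟨ham, hadm⟩
  · have h : d ≡ 1 [MOD C.length] :=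
      Nat.ModEq.add_left_cancel' a (hadm.trans (Nat.ModEq.add_right 1 ham.symm))
    rw [Nat.ModEq, Nat.mod_eq_of_lt (by omega), Nat.mod_eq_of_lt (by omega)] at h
    omega
  · have h : d + 1 ≡ 0 [MOD C.length] :=
      Nat.ModEq.add_left_cancel' a ((Nat.ModEq.add_right 1 hadm).trans ham.symm)
    rw [Nat.ModEq, Nat.mod_eq_of_lt (by omega), Nat.zero_mod] at h
    omega

theorem SimpleGraph.Walk.IsCycle.isChordAt_add (hC : C.IsCycle) {a d : ℕ} (hd : 2 ≤ d)
    (hdn : d + 2 ≤ C.length) (hadj : G.Adj (cvtx C a) (cvtx C (a + d))) : IsChordAt C a (a + d) :=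
  ⟨hadj, hC.mk_cvtx_add_notMem_edges a hd hdn⟩

end Cycle

theorem stmt_15_general (G : SimpleGraph V) (r : ℕ) (part : V → Fin r)
    (hpart : ∀ u w : V, G.Adj u w ↔ part u ≠ part w)
    (v : V) (C : G.Walk v v) (hC : C.IsCycle)
    (hno : ¬ HasTwoAdjOddChords C) :
    ∀ i j : ℕ, i < j → j < C.length → Even (j - i) →
      4 ≤ j - i → j - i ≤ C.length - 4 → G.Adj (cvtx C i) (cvtx C j) := by
  intro i j hij _ hev h4 hsplit
  obtain ⟨d, rfl⟩ : ∃ d, j = i + d := ⟨j - i, by omega⟩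
  rw [Nat.add_sub_cancel_left] at hev h4 hsplit
  have hG := isCompleteMultipartite_of_adj_iff part hpart
  have hd := Nat.even_iff.1 hev
  by_contra hnot
  refine hno ⟨i, d - 1, by omega, by omega, ?_, Or.inl (Nat.odd_iff.2 (by omega)), ?_,
    Or.inr (Nat.odd_iff.2 (by omega))⟩
  · refine hC.isChordAt_add (by omega) (by omega) (hG.adj_of_adj_of_not_adj hnot ?_).symm
    simpa only [show i + (d - 1) + 1 = i + d by omega] using hC.adj_cvtx_succ (i + (d - 1))
  · rw [show i + (d - 1) + 1 = i + d by omega,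
      show i + C.length - 1 = i + d + (C.length - d - 1) by omega]
    refine hC.isChordAt_add (by omega) (by omega)
      (hG.adj_of_adj_of_not_adj (fun h => hnot h.symm) ?_).symm
    simpa only [show i + d + (C.length - d - 1) + 1 = i + C.length by omega, cvtx_add_length]
      using hC.adj_cvtx_succ (i + d + (C.length - d - 1))

/-- in a complete `r`-partite graph, an even cycle of length at
least 8 without two adjacent odd chords has all even chords with split at least 4:
any two vertices of `C` at even distance at least 4 (on both arcs) along `C` are
adjacent in `G`. -/
theorem stmt_15 (G : SimpleGraph V) (r : ℕ) (part : V → Fin r)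
    (hpart : ∀ u w : V, G.Adj u w ↔ part u ≠ part w)
    (v : V) (C : G.Walk v v) (hC : C.IsCycle)
    (heven : Even C.length) (hlen : 8 ≤ C.length)
    (hno : ¬ HasTwoAdjOddChords C) :
    ∀ i j : ℕ, i < j → j < C.length → Even (j - i) →
      4 ≤ j - i → j - i ≤ C.length - 4 → G.Adj (cvtx C i) (cvtx C j) :=
  stmt_15_general G r part hpart v C hC hno
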